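/- arXiv:quant-ph/0504060 — 5 statements merged into one kernel-verified Lean document; each statement's English description precedes it below -/
import Mathlib

section
/- Let H be a bounded self-adjoint operator on a complex Hilbert space 𝓗 and let P be an orthogonal projection on 𝓗. Then for every T > 0 the operators (P ∘ exp(−(it/n)H) ∘ P)^n converge in operator norm, as n → ∞, to exp(−it·(P∘H∘P)) ∘ P, uniformly for t in the compact interval [0, T]. -/
/-!
Put `a = P e^{y} P` and `b = e^{P y P} P` with `y = -(it/n) H`. Since `P` commutes with `P y P`,
`b ^ n = e^{-it PHP} P`. Both `a` and `b` have norm at most `e^{‖y‖}`, and they agree to first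
order in `y` because `P (P y P) P = P y P`, so `‖a - b‖ = O(‖y‖²) = O(1/n²)`. Telescoping
`a ^ n - b ^ n` then costs a factor `n`, giving an `O(1/n)` bound uniform for `t ∈ [0, T]`.
-/

open scoped InnerProductSpace Topology

open NormedSpace
open scoped Nat

lemma Real.hasSum_pow_div_factorial (r : ℝ) : HasSum (fun n => r ^ n / n !) (Real.exp r) :=
  Real.exp_eq_exp_ℝ ▸ expSeries_div_hasSum_exp r

section ExpBounds

variable {𝔸 : Type*} [NormedRing 𝔸] [NormedAlgebra ℚ 𝔸]

lemma norm_inv_factorial_smul_pow_le (x : 𝔸) {n : ℕ} (hn : n ≠ 0) :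
    ‖(n !⁻¹ : ℚ) • x ^ n‖ ≤ ‖x‖ ^ n / n ! := by
  rw [norm_smul, div_eq_inv_mul, norm_inv, ← Rat.norm_cast_real]
  push_cast
  rw [Real.norm_natCast]
  gcongr
  exact norm_pow_le' x (Nat.pos_of_ne_zero hn)

variable [CompleteSpace 𝔸]

lemma NormedSpace.norm_exp_le_exp_norm [NormOneClass 𝔸] (x : 𝔸) : ‖exp x‖ ≤ Real.exp ‖x‖ :=
  (exp_series_hasSum_exp' (𝕂 := ℚ) x).norm_le_of_bounded (Real.hasSum_pow_div_factorial ‖x‖)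
    fun n => by
      rcases eq_or_ne n 0 with rfl | hn
      · simp
      · exact norm_inv_factorial_smul_pow_le x hn

lemma NormedSpace.norm_exp_sub_one_sub_le (x : 𝔸) :
    ‖exp x - 1 - x‖ ≤ ‖x‖ ^ 2 * Real.exp ‖x‖ := by
  have hsum : HasSum (fun n => (((n + 2) !)⁻¹ : ℚ) • x ^ (n + 2)) (exp x - 1 - x) := by
    have := (hasSum_nat_add_iff' 2).2 (exp_series_hasSum_exp' (𝕂 := ℚ) x)
    simpa [Finset.sum_range_succ, sub_sub] using this
  refine hsum.norm_le_of_bounded ((Real.hasSum_pow_div_factorial ‖x‖).mul_left (‖x‖ ^ 2))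
    fun n => ?_
  calc ‖(((n + 2) !)⁻¹ : ℚ) • x ^ (n + 2)‖ ≤ ‖x‖ ^ (n + 2) / (n + 2) ! :=
        norm_inv_factorial_smul_pow_le x (n := n + 2) (by omega)
    _ ≤ ‖x‖ ^ (n + 2) / n ! := by gcongr; omega
    _ = ‖x‖ ^ 2 * (‖x‖ ^ n / n !) := by ring

end ExpBounds

lemma norm_pow_sub_pow_le {𝔸 : Type*} [NormedRing 𝔸] [NormOneClass 𝔸] {a b : 𝔸} {r : ℝ}
    (ha : ‖a‖ ≤ r) (hb : ‖b‖ ≤ r) (n : ℕ) :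
    ‖a ^ n - b ^ n‖ ≤ n * r ^ (n - 1) * ‖a - b‖ := by
  induction n with
  | zero => simp
  | succ n ih =>
    have hr : 0 ≤ r := (norm_nonneg a).trans ha
    have hrn : r * (n * r ^ (n - 1)) = n * r ^ n := by
      rcases eq_or_ne n 0 with rfl | hn
      · simp
      · rw [mul_left_comm, mul_pow_sub_one hn]
    calc ‖a ^ (n + 1) - b ^ (n + 1)‖ = ‖a * (a ^ n - b ^ n) + (a - b) * b ^ n‖ := by
          rw [pow_succ', pow_succ']; congr 1; noncomm_ring
      _ ≤ ‖a‖ * ‖a ^ n - b ^ n‖ + ‖a - b‖ * ‖b‖ ^ n :=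
          (norm_add_le _ _).trans (add_le_add (norm_mul_le _ _)
            ((norm_mul_le _ _).trans (by gcongr; exact norm_pow_le b n)))
      _ ≤ r * (n * r ^ (n - 1) * ‖a - b‖) + ‖a - b‖ * r ^ n := by gcongr
      _ = (n + 1 : ℕ) * r ^ (n + 1 - 1) * ‖a - b‖ := by
          rw [← mul_assoc, hrn]; push_cast; ring_nf

lemma norm_mul_mul_le_of_norm_le_one {𝔸 : Type*} [NonUnitalSeminormedRing 𝔸] {p : 𝔸}
    (hp : ‖p‖ ≤ 1) (z : 𝔸) : ‖p * z * p‖ ≤ ‖z‖ :=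
  calc ‖p * z * p‖ ≤ ‖p‖ * ‖z‖ * ‖p‖ := norm_mul₃_le
    _ ≤ 1 * ‖z‖ * 1 := by gcongr
    _ = ‖z‖ := by ring

lemma tendstoUniformlyOn_of_subsingleton {ι α β : Type*} [UniformSpace β] [Subsingleton β]
    {F : ι → α → β} {f : α → β} {l : Filter ι} {s : Set α} : TendstoUniformlyOn F f l s :=
  fun _ hu => .of_forall fun n x _ => Subsingleton.elim (F n x) (f x) ▸ refl_mem_uniformity hu

lemma tendstoUniformlyOn_of_dist_le {ι β α : Type*} [PseudoMetricSpace α] {F : ι → β → α}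
    {f : β → α} {l : Filter ι} {s : Set β} {u : ι → ℝ} (hu : Filter.Tendsto u l (𝓝 0))
    (h : ∀ᶠ n in l, ∀ x ∈ s, dist (f x) (F n x) ≤ u n) : TendstoUniformlyOn F f l s :=
  Metric.tendstoUniformlyOn_iff.2 fun ε hε => by
    filter_upwards [h, hu.eventually_lt_const hε] with n hn hnε x hx
    exact (hn x hx).trans_lt hnε

section Compression

variable {𝔸 : Type*} [NormedRing 𝔸] {p : 𝔸}

lemma IsIdempotentElem.mul_mul_mul_left (hp : IsIdempotentElem p) (z : 𝔸) :
    p * (p * z * p) = p * z * p := by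
  rw [← mul_assoc, ← mul_assoc, hp.eq]

lemma IsIdempotentElem.mul_mul_mul_right (hp : IsIdempotentElem p) (z : 𝔸) :
    p * z * p * p = p * z * p := by
  rw [mul_assoc _ p p, hp.eq]

lemma IsIdempotentElem.commute_mul_mul (hp : IsIdempotentElem p) (z : 𝔸) :
    Commute p (p * z * p) :=
  (hp.mul_mul_mul_left z).trans (hp.mul_mul_mul_right z).symm

variable [NormedAlgebra ℚ 𝔸] [CompleteSpace 𝔸]

lemma IsIdempotentElem.exp_mul_mul_mul_pow (hp : IsIdempotentElem p) (y : 𝔸) {n : ℕ}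
    (hn : n ≠ 0) : (exp (p * y * p) * p) ^ n = exp (p * (n • y) * p) * p := by
  rw [((hp.commute_mul_mul y).exp_right).symm.mul_pow, ← exp_nsmul, hp.pow_eq hn, mul_smul_comm,
    smul_mul_assoc]

lemma IsIdempotentElem.norm_mul_exp_mul_sub_le (hp : IsIdempotentElem p) (hp1 : ‖p‖ ≤ 1)
    (y : 𝔸) : ‖p * exp y * p - exp (p * y * p) * p‖ ≤ 2 * ‖y‖ ^ 2 * Real.exp ‖y‖ := by
  set z := p * y * p
  have hzy : ‖z‖ ≤ ‖y‖ := norm_mul_mul_le_of_norm_le_one hp1 y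
  have hexp : exp z * p = p * exp z * p := by
    rw [mul_assoc, ← ((hp.commute_mul_mul y).exp_right).eq, ← mul_assoc, hp.eq]
  have hdiff : p * exp y * p - exp z * p = p * (exp y - 1 - y) * p - p * (exp z - 1 - z) * p := by
    rw [hexp]
    have hpzp : p * z * p = z := (hp.mul_mul_mul_left y).symm ▸ hp.mul_mul_mul_right _
    calc p * exp y * p - p * exp z * p
        = p * (exp y - 1 - y) * p - p * (exp z - 1 - z) * p + (z - p * z * p) := by
          simp only [z]; noncomm_ring
      _ = _ := by rw [hpzp, sub_self, add_zero]
  rw [hdiff]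
  calc _ ≤ ‖exp y - 1 - y‖ + ‖exp z - 1 - z‖ :=
        (norm_sub_le _ _).trans (add_le_add (norm_mul_mul_le_of_norm_le_one hp1 _)
          (norm_mul_mul_le_of_norm_le_one hp1 _))
    _ ≤ ‖y‖ ^ 2 * Real.exp ‖y‖ + ‖z‖ ^ 2 * Real.exp ‖z‖ :=
        add_le_add (norm_exp_sub_one_sub_le y) (norm_exp_sub_one_sub_le z)
    _ ≤ ‖y‖ ^ 2 * Real.exp ‖y‖ + ‖y‖ ^ 2 * Real.exp ‖y‖ := by gcongr
    _ = 2 * ‖y‖ ^ 2 * Real.exp ‖y‖ := by ring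

lemma IsIdempotentElem.norm_mul_exp_mul_pow_sub_le [NormOneClass 𝔸] (hp : IsIdempotentElem p)
    (hp1 : ‖p‖ ≤ 1) (y : 𝔸) {n : ℕ} (hn : n ≠ 0) :
    ‖(p * exp y * p) ^ n - exp (p * (n • y) * p) * p‖ ≤
      2 * n * ‖y‖ ^ 2 * Real.exp (n * ‖y‖) := by
  rw [← hp.exp_mul_mul_mul_pow y hn]
  have ha : ‖p * exp y * p‖ ≤ Real.exp ‖y‖ :=
    (norm_mul_mul_le_of_norm_le_one hp1 _).trans (norm_exp_le_exp_norm y)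
  have hb : ‖exp (p * y * p) * p‖ ≤ Real.exp ‖y‖ :=
    calc _ ≤ ‖exp (p * y * p)‖ * 1 := (norm_mul_le _ _).trans (by gcongr)
      _ ≤ Real.exp ‖y‖ := by
        rw [mul_one]
        exact (norm_exp_le_exp_norm _).trans
          (Real.exp_le_exp.2 (norm_mul_mul_le_of_norm_le_one hp1 y))
  calc _ ≤ n * Real.exp ‖y‖ ^ (n - 1) * ‖p * exp y * p - exp (p * y * p) * p‖ :=
        norm_pow_sub_pow_le ha hb n
    _ ≤ n * Real.exp ‖y‖ ^ (n - 1) * (2 * ‖y‖ ^ 2 * Real.exp ‖y‖) := by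
        gcongr; exact hp.norm_mul_exp_mul_sub_le hp1 y
    _ = 2 * n * ‖y‖ ^ 2 * (Real.exp ‖y‖ ^ (n - 1) * Real.exp ‖y‖) := by ring
    _ = 2 * n * ‖y‖ ^ 2 * Real.exp (n * ‖y‖) := by rw [pow_sub_one_mul hn, Real.exp_nat_mul]

end Compression

theorem zeno_product_formula_bounded_general
    {𝓗 : Type*} [NormedAddCommGroup 𝓗] [InnerProductSpace ℂ 𝓗] [CompleteSpace 𝓗]
    (H P : 𝓗 →L[ℂ] 𝓗)
    (hPproj : P ∘L P = P)
    (hPsa : ∀ x y : 𝓗, ⟪P x, y⟫_ℂ = ⟪x, P y⟫_ℂ)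
    (T : ℝ) :
    TendstoUniformlyOn
      (fun (n : ℕ) (t : ℝ) =>
        (P ∘L NormedSpace.exp ((-(Complex.I * (t / n))) • H) ∘L P) ^ n)
      (fun t : ℝ =>
        NormedSpace.exp ((-(Complex.I * t)) • (P ∘L H ∘L P)) ∘L P)
      Filter.atTop (Set.Icc 0 T) := by
  obtain h𝓗 | h𝓗 := subsingleton_or_nontrivial 𝓗
  · exact tendstoUniformlyOn_of_subsingleton
  -- `NormedSpace.exp` only asks for some `ℚ`-algebra structure, so any choice computes it.
  let : NormedAlgebra ℚ (𝓗 →L[ℂ] 𝓗) := NormedAlgebra.restrictScalars ℚ ℂ _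
  have hP : IsIdempotentElem P := hPproj
  have hP1 : ‖P‖ ≤ 1 := IsStarProjection.norm_le P ⟨hP, LinearMap.IsSymmetric.isSelfAdjoint hPsa⟩
  refine tendstoUniformlyOn_of_dist_le
    (tendsto_const_div_atTop_nhds_zero_nat (2 * (T * ‖H‖) ^ 2 * Real.exp (T * ‖H‖))) ?_
  filter_upwards [Filter.eventually_ne_atTop 0] with n hn t ⟨ht0, htT⟩
  set y := (-(Complex.I * (t / n))) • H
  have hny : n • y = (-(Complex.I * t)) • H := by
    rw [← Nat.cast_smul_eq_nsmul ℂ, smul_smul]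
    congr 1
    field_simp
  have hcompress : P * (n • y) * P = (-(Complex.I * t)) • (P ∘L H ∘L P) := by
    rw [hny, mul_smul_comm, smul_mul_assoc, mul_assoc]
    rfl
  have hy : n * ‖y‖ = t * ‖H‖ := by
    rw [norm_smul, norm_neg, norm_mul, Complex.norm_I, one_mul, norm_div, Complex.norm_real,
      Complex.norm_natCast, Real.norm_of_nonneg ht0]
    field_simp
  rw [dist_comm, dist_eq_norm]
  calc _ = ‖(P * exp y * P) ^ n - exp (P * (n • y) * P) * P‖ := by
        rw [hcompress, mul_assoc]; rfl
    _ ≤ 2 * n * ‖y‖ ^ 2 * Real.exp (n * ‖y‖) := hP.norm_mul_exp_mul_pow_sub_le hP1 y hn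
    _ = 2 * (t * ‖H‖) ^ 2 * Real.exp (t * ‖H‖) / n := by rw [← hy]; field_simp
    _ ≤ _ := by gcongr

/-- **Zeno product formula, bounded case.** For a bounded self-adjoint operator `H`
and an orthogonal projection `P` on a complex Hilbert space, the products
`(P e^{-itH/n} P)^n` converge in operator norm to `e^{-it P H P} P`,
uniformly for `t` in a compact interval `[0, T]`. -/
theorem zeno_product_formula_bounded
    {𝓗 : Type*} [NormedAddCommGroup 𝓗] [InnerProductSpace ℂ 𝓗] [CompleteSpace 𝓗]
    (H P : 𝓗 →L[ℂ] 𝓗)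
    (hH : ∀ x y : 𝓗, ⟪H x, y⟫_ℂ = ⟪x, H y⟫_ℂ)
    (hPproj : P ∘L P = P)
    (hPsa : ∀ x y : 𝓗, ⟪P x, y⟫_ℂ = ⟪x, P y⟫_ℂ)
    (T : ℝ) (hT : 0 < T) :
    TendstoUniformlyOn
      (fun (n : ℕ) (t : ℝ) =>
        (P ∘L NormedSpace.exp ((-(Complex.I * (t / n))) • H) ∘L P) ^ n)
      (fun t : ℝ =>
        NormedSpace.exp ((-(Complex.I * t)) • (P ∘L H ∘L P)) ∘L P)
      Filter.atTop (Set.Icc 0 T) :=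
  zeno_product_formula_bounded_general H P hPproj hPsa T
end

section
/- Let H be an m×m Hermitian complex matrix and let P be an m×m complex matrix with P·P = P and Pᴴ = P (an orthogonal projection matrix). Then for every real t, (P · exp(−(it/n)·H) · P)^n converges, as n → ∞, to exp(−it·(P·H·P)) · P. -/
/-! Put `K = P x P`, `aₙ = P exp(x/n) P` and `bₙ = P exp(K/n) P`. Since `P` commutes with `K`,
`bₙⁿ = exp(K) P` exactly. As `exp y = 1 + y + o(y)`, both `aₙ` and `bₙ` equal `P + K/n + o(1/n)`,
and once `‖P‖ ≤ 1` (true for an orthogonal projection in the operator norm) both have norm at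
most `1 + c/n ≤ e^{c/n}`. The telescoping bound `‖aⁿ - bⁿ‖ ≤ n Mⁿ⁻¹ ‖a - b‖` with `M = e^{c/n}`
then turns `aₙ - bₙ = o(1/n)` into `aₙⁿ - bₙⁿ → 0`. -/

open scoped Topology Matrix

open Filter Asymptotics NormedSpace

section NormedRing

variable {R : Type*} [NormedRing R]

theorem norm_mul_mul_le_of_norm_le_one_s3 {p : R} (hp : ‖p‖ ≤ 1) (y : R) : ‖p * y * p‖ ≤ ‖y‖ :=
  calc ‖p * y * p‖ ≤ ‖p‖ * ‖y‖ * ‖p‖ := norm_mul₃_le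
    _ ≤ 1 * ‖y‖ * 1 := by gcongr
    _ = ‖y‖ := by ring

theorem norm_pow_succ_sub_pow_succ_le {a b : R} {M : ℝ} (ha : ‖a‖ ≤ M) (hb : ‖b‖ ≤ M) (k : ℕ) :
    ‖a ^ (k + 1) - b ^ (k + 1)‖ ≤ (k + 1) * M ^ k * ‖a - b‖ := by
  have hM : 0 ≤ M := (norm_nonneg a).trans ha
  induction k with
  | zero => simp
  | succ k ih =>
    calc ‖a ^ (k + 2) - b ^ (k + 2)‖
        = ‖a * (a ^ (k + 1) - b ^ (k + 1)) + (a - b) * b ^ (k + 1)‖ := by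
          rw [mul_sub, sub_mul, pow_succ' a (k + 1), pow_succ' b (k + 1),
            sub_add_sub_cancel]
      _ ≤ ‖a‖ * ‖a ^ (k + 1) - b ^ (k + 1)‖ + ‖a - b‖ * ‖b‖ ^ (k + 1) :=
          (norm_add_le _ _).trans <| add_le_add (norm_mul_le _ _)
            ((norm_mul_le _ _).trans <| by gcongr; exact norm_pow_le' b k.succ_pos)
      _ ≤ M * ((k + 1) * M ^ k * ‖a - b‖) + ‖a - b‖ * M ^ (k + 1) := by gcongr
      _ = ((k + 1 : ℕ) + 1) * M ^ (k + 1) * ‖a - b‖ := by push_cast; ring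

theorem tendsto_pow_sub_pow_of_isLittleO {a b : ℕ → R} {c : ℝ} (hc : 0 ≤ c)
    (ha : ∀ᶠ n : ℕ in atTop, ‖a n‖ ≤ Real.exp (c / n))
    (hb : ∀ᶠ n : ℕ in atTop, ‖b n‖ ≤ Real.exp (c / n))
    (hab : (fun n => a n - b n) =o[atTop] fun n => (n : ℝ)⁻¹) :
    Tendsto (fun n => a n ^ n - b n ^ n) atTop (𝓝 0) := by
  have hlim : Tendsto (fun n : ℕ => Real.exp c * (n * ‖a n - b n‖)) atTop (𝓝 0) := by
    simpa [div_inv_eq_mul, mul_comm] using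
      (hab.norm_left.tendsto_div_nhds_zero).const_mul (Real.exp c)
  refine squeeze_zero_norm' ?_ hlim
  filter_upwards [ha, hb, eventually_ge_atTop 1] with n ha hb hn
  obtain ⟨k, rfl⟩ : ∃ k, n = k + 1 := ⟨n - 1, by omega⟩
  have hexp : Real.exp (c / (k + 1 : ℕ)) ^ k ≤ Real.exp c := by
    rw [← Real.exp_nat_mul, Real.exp_le_exp, mul_div_left_comm]
    exact mul_le_of_le_one_right hc <| (div_le_one (by positivity)).2 (by push_cast; linarith)
  calc ‖a (k + 1) ^ (k + 1) - b (k + 1) ^ (k + 1)‖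
      ≤ (k + 1) * Real.exp (c / (k + 1 : ℕ)) ^ k * ‖a (k + 1) - b (k + 1)‖ :=
        norm_pow_succ_sub_pow_succ_le ha hb k
    _ ≤ (k + 1) * Real.exp c * ‖a (k + 1) - b (k + 1)‖ := by gcongr
    _ = Real.exp c * ((k + 1 : ℕ) * ‖a (k + 1) - b (k + 1)‖) := by push_cast; ring

end NormedRing

section BanachAlgebra

variable {𝕂 𝔸 : Type*} [RCLike 𝕂] [NormedRing 𝔸] [NormedAlgebra 𝕂 𝔸]

theorem norm_inv_natCast_smul (x : 𝔸) (n : ℕ) : ‖(n : 𝕂)⁻¹ • x‖ = ‖x‖ / n := by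
  rw [norm_smul, norm_inv, RCLike.norm_natCast, inv_mul_eq_div]

theorem isLittleO_exp_inv_smul_sub [CompleteSpace 𝔸] (x : 𝔸) :
    (fun n : ℕ => exp ((n : 𝕂)⁻¹ • x) - 1 - (n : 𝕂)⁻¹ • x) =o[atTop] fun n => (n : ℝ)⁻¹ := by
  have hexp : (fun y : 𝔸 => exp y - 1 - y) =o[𝓝 0] fun y => y := by
    simpa using hasFDerivAt_iff_isLittleO_nhds_zero.1 (hasFDerivAt_exp_zero (𝕂 := 𝕂) (𝔸 := 𝔸))
  have hlim : Tendsto (fun n : ℕ => (n : 𝕂)⁻¹ • x) atTop (𝓝 0) := by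
    simpa using (tendsto_inv_atTop_nhds_zero_nat (𝕜 := 𝕂)).smul_const x
  refine (hexp.comp_tendsto hlim).trans_isBigO (IsBigO.of_bound ‖x‖ ?_)
  filter_upwards with n
  rw [Function.comp_apply, norm_inv_natCast_smul, Real.norm_eq_abs, abs_inv, Nat.abs_cast,
    div_eq_mul_inv]

variable {P : 𝔸}

theorem IsIdempotentElem.mul_exp_mul (hP : IsIdempotentElem P) (y : 𝔸) :
    P * exp y * P = P + P * y * P + P * (exp y - 1 - y) * P := by
  conv_lhs => rw [show exp y = 1 + y + (exp y - 1 - y) by rw [sub_sub, add_sub_cancel]]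
  simp only [mul_add, add_mul, mul_one, hP.eq]

theorem eventually_norm_mul_exp_inv_smul_mul_le [CompleteSpace 𝔸] (hP : IsIdempotentElem P)
    (hP1 : ‖P‖ ≤ 1) (x : 𝔸) :
    ∀ᶠ n : ℕ in atTop, ‖P * exp ((n : 𝕂)⁻¹ • x) * P‖ ≤ Real.exp ((‖x‖ + 1) / n) := by
  filter_upwards [(isLittleO_exp_inv_smul_sub (𝕂 := 𝕂) x).bound one_pos] with n hn
  rw [one_mul, Real.norm_eq_abs, abs_inv, Nat.abs_cast] at hn
  calc ‖P * exp ((n : 𝕂)⁻¹ • x) * P‖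
      ≤ ‖P‖ + ‖P * ((n : 𝕂)⁻¹ • x) * P‖ + ‖P * (exp ((n : 𝕂)⁻¹ • x) - 1 - (n : 𝕂)⁻¹ • x) * P‖ := by
        rw [hP.mul_exp_mul]; exact norm_add₃_le
    _ ≤ 1 + ‖x‖ / n + (n : ℝ)⁻¹ := by
        gcongr
        · exact (norm_mul_mul_le_of_norm_le_one_s3 hP1 _).trans (norm_inv_natCast_smul x n).le
        · exact (norm_mul_mul_le_of_norm_le_one_s3 hP1 _).trans hn
    _ = (‖x‖ + 1) / n + 1 := by ring
    _ ≤ Real.exp ((‖x‖ + 1) / n) := Real.add_one_le_exp _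

theorem isLittleO_mul_exp_inv_smul_mul_sub [CompleteSpace 𝔸] (hP : IsIdempotentElem P)
    (hP1 : ‖P‖ ≤ 1) (x : 𝔸) :
    (fun n : ℕ => P * exp ((n : 𝕂)⁻¹ • x) * P - P * exp ((n : 𝕂)⁻¹ • (P * x * P)) * P)
      =o[atTop] fun n => (n : ℝ)⁻¹ := by
  have hsandwich : ∀ f : ℕ → 𝔸, (fun n => P * f n * P) =O[atTop] f := fun f =>
    IsBigO.of_bound 1 (Eventually.of_forall fun n => by
      rw [one_mul]; exact norm_mul_mul_le_of_norm_le_one_s3 hP1 _)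
  have hcorner : ∀ n : ℕ, P * ((n : 𝕂)⁻¹ • (P * x * P)) * P = P * ((n : 𝕂)⁻¹ • x) * P := by
    intro n
    simp only [mul_smul_comm, smul_mul_assoc, ← mul_assoc, hP.eq]
    simp only [mul_assoc, hP.eq]
  refine ((hsandwich _).trans_isLittleO (isLittleO_exp_inv_smul_sub (𝕂 := 𝕂) x)).sub
    ((hsandwich _).trans_isLittleO (isLittleO_exp_inv_smul_sub (𝕂 := 𝕂) (P * x * P)))
    |>.congr_left ?_
  intro n
  simp only [hP.mul_exp_mul, hcorner]
  rw [add_sub_add_left_eq_sub]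

theorem IsIdempotentElem.mul_exp_inv_smul_mul_pow [CompleteSpace 𝔸] (hP : IsIdempotentElem P)
    {y : 𝔸} (hPy : Commute P y) {n : ℕ} (hn : n ≠ 0) :
    (P * exp ((n : 𝕂)⁻¹ • y) * P) ^ n = exp y * P := by
  -- `exp_nsmul` is stated for `ℚ`-algebras; `exp` itself does not depend on the choice.
  let : NormedAlgebra ℚ 𝔸 := NormedAlgebra.restrictScalars ℚ 𝕂 𝔸
  have hexp : Commute P (exp ((n : 𝕂)⁻¹ • y)) := (hPy.smul_right _).exp_right
  obtain ⟨k, rfl⟩ : ∃ k, n = k + 1 := ⟨n - 1, by omega⟩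
  rw [hexp.eq, mul_assoc, hP.eq, hexp.symm.mul_pow, ← exp_nsmul, hP.pow_succ_eq,
    ← Nat.cast_smul_eq_nsmul 𝕂, smul_smul, mul_inv_cancel₀ (Nat.cast_ne_zero.2 hn), one_smul]

theorem tendsto_mul_exp_inv_smul_mul_pow [CompleteSpace 𝔸] (hP : IsIdempotentElem P)
    (hP1 : ‖P‖ ≤ 1) (x : 𝔸) :
    Tendsto (fun n : ℕ => (P * exp ((n : 𝕂)⁻¹ • x) * P) ^ n) atTop (𝓝 (exp (P * x * P) * P)) := by
  have hPx : Commute P (P * x * P) := by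
    rw [commute_iff_eq]; simp only [← mul_assoc, hP.eq]; simp only [mul_assoc, hP.eq]
  have hpow : ∀ᶠ n : ℕ in atTop,
      (P * exp ((n : 𝕂)⁻¹ • (P * x * P)) * P) ^ n = exp (P * x * P) * P :=
    (eventually_ne_atTop 0).mono fun n hn => hP.mul_exp_inv_smul_mul_pow hPx hn
  have hnorm : ∀ᶠ n : ℕ in atTop,
      ‖P * exp ((n : 𝕂)⁻¹ • (P * x * P)) * P‖ ≤ Real.exp ((‖x‖ + 1) / n) :=
    (eventually_norm_mul_exp_inv_smul_mul_le hP hP1 _).mono fun n h =>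
      h.trans (by gcongr; exact norm_mul_mul_le_of_norm_le_one_s3 hP1 x)
  rw [← tendsto_sub_nhds_zero_iff]
  refine (tendsto_pow_sub_pow_of_isLittleO (by positivity)
    (eventually_norm_mul_exp_inv_smul_mul_le hP hP1 x) hnorm
    (isLittleO_mul_exp_inv_smul_mul_sub hP hP1 x)).congr' ?_
  filter_upwards [hpow] with n hn
  rw [hn]

end BanachAlgebra

theorem zeno_product_formula_matrix_general {m : ℕ}
    (H P : Matrix (Fin m) (Fin m) ℂ)
    (hPproj : P * P = P)
    (hPsa : Pᴴ = P)
    (t : ℝ) :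
    Filter.Tendsto
      (fun n : ℕ => (P * NormedSpace.exp ((-(Complex.I * (t / n))) • H) * P) ^ n)
      Filter.atTop
      (𝓝 (NormedSpace.exp ((-(Complex.I * t)) • (P * H * P)) * P)) := by
  have hcoef : ∀ n : ℕ, -(Complex.I * (t / n)) • H = (n : ℂ)⁻¹ • -(Complex.I * t) • H := by
    intro n; rw [smul_smul]; congr 1; ring
  have hcorner : -(Complex.I * t) • (P * H * P) = P * (-(Complex.I * t) • H) * P := by
    rw [mul_smul_comm, smul_mul_assoc]
  simp only [hcoef, hcorner]
  have hP : IsStarProjection P := ⟨hPproj, hPsa⟩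
  open scoped Matrix.Norms.L2Operator in
  exact tendsto_mul_exp_inv_smul_mul_pow hP.isIdempotentElem (hP.norm_le P) _

/-- **Zeno product formula for matrices.** For a Hermitian matrix `H` and an orthogonal
projection matrix `P`, `(P e^{-itH/n} P)^n → e^{-it P H P} P` as `n → ∞`. -/
theorem zeno_product_formula_matrix {m : ℕ}
    (H P : Matrix (Fin m) (Fin m) ℂ)
    (hH : Hᴴ = H)
    (hPproj : P * P = P)
    (hPsa : Pᴴ = P)
    (t : ℝ) :
    Filter.Tendsto
      (fun n : ℕ => (P * NormedSpace.exp ((-(Complex.I * (t / n))) • H) * P) ^ n)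
      Filter.atTop
      (𝓝 (NormedSpace.exp ((-(Complex.I * t)) • (P * H * P)) * P)) :=
  zeno_product_formula_matrix_general H P hPproj hPsa t
end

section
/- Let H be a bounded self-adjoint operator on a complex Hilbert space 𝓗 and let P be an orthogonal projection on 𝓗. Then (1/t)·‖P ∘ exp(−itH) ∘ P − P ∘ exp(−it·(P∘H∘P)) ∘ P‖ tends to 0 as t → 0. -/
open scoped InnerProductSpace Topology

/-! Both `t ↦ P e^{-itH} P` and `t ↦ P e^{-it PHP} P` equal `P` at `t = 0`, and their derivatives
there are `-i PHP` and `-i P(PHP)P = -i PHP`. So their difference vanishes to first order at `0`,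
i.e. it is `o(t)`. -/

open Filter Asymptotics NormedSpace Complex

theorem tendsto_one_div_mul_norm_of_hasDerivAt_zero {E : Type*} [NormedAddCommGroup E]
    [NormedSpace ℝ E] {f : ℝ → E} (hf : HasDerivAt f 0 0) (hf0 : f 0 = 0) :
    Tendsto (fun t => 1 / t * ‖f t‖) (𝓝 0) (𝓝 0) := by
  have hlo : (fun t => ‖f t‖) =o[𝓝 0] fun t => t := by
    simpa [hf0] using hf.isLittleO.norm_left
  simpa [div_eq_inv_mul] using hlo.tendsto_div_nhds_zero

theorem IsIdempotentElem.compress_compress {S : Type*} [Semigroup S] {p : S}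
    (hp : IsIdempotentElem p) (a : S) : p * (p * a * p) * p = p * a * p := by
  rw [← mul_assoc, ← mul_assoc, hp.eq, mul_assoc, hp.eq]

section BanachAlgebra

variable {𝔸 : Type*} [NormedRing 𝔸] [NormedAlgebra ℂ 𝔸] [CompleteSpace 𝔸]

theorem hasDerivAt_exp_neg_I_mul_smul (a : 𝔸) (z : ℂ) :
    HasDerivAt (fun u : ℂ => exp ((-(I * u)) • a)) ((-I) • (exp ((-(I * z)) • a) * a)) z := by
  have hlin : HasDerivAt (fun u : ℂ => -(I * u)) (-I) z := by
    simpa only [neg_mul, mul_one] using (hasDerivAt_id' z).const_mul (-I)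
  exact (hasDerivAt_exp_smul_const a (-(I * z))).scomp z hlin

theorem hasDerivAt_compress_exp_sub_exp_compress {p : 𝔸} (hp : IsIdempotentElem p) (a : 𝔸) :
    HasDerivAt
      (fun u : ℂ => p * exp ((-(I * u)) • a) * p - p * exp ((-(I * u)) • (p * a * p)) * p) 0 0 := by
  have h := (((hasDerivAt_exp_neg_I_mul_smul a 0).const_mul p).mul_const p).sub
    (((hasDerivAt_exp_neg_I_mul_smul (p * a * p) 0).const_mul p).mul_const p)
  exact h.congr_deriv (by simp [hp.compress_compress])

theorem tendsto_one_div_mul_norm_compress_exp_sub_exp_compress {p : 𝔸} (hp : IsIdempotentElem p)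
    (a : 𝔸) :
    Tendsto (fun t : ℝ => 1 / t *
      ‖p * exp ((-(I * t)) • a) * p - p * exp ((-(I * t)) • (p * a * p)) * p‖) (𝓝 0) (𝓝 0) := by
  have hreal := (hasDerivAt_compress_exp_sub_exp_compress hp a).scomp
    (h := ((↑) : ℝ → ℂ)) 0 ofRealCLM.hasDerivAt
  exact tendsto_one_div_mul_norm_of_hasDerivAt_zero
    (by simpa [Function.comp_def] using hreal) (by simp)

end BanachAlgebra

theorem zeno_small_time_estimate_general
    {𝓗 : Type*} [NormedAddCommGroup 𝓗] [InnerProductSpace ℂ 𝓗] [CompleteSpace 𝓗]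
    (H P : 𝓗 →L[ℂ] 𝓗)
    (hPproj : P ∘L P = P) :
    Filter.Tendsto
      (fun t : ℝ => (1 / t) *
        ‖P ∘L NormedSpace.exp ((-(Complex.I * t)) • H) ∘L P
          - P ∘L NormedSpace.exp ((-(Complex.I * t)) • (P ∘L H ∘L P)) ∘L P‖)
      (𝓝 0) (𝓝 0) := by
  simpa only [ContinuousLinearMap.mul_def, ContinuousLinearMap.comp_assoc] using
    tendsto_one_div_mul_norm_compress_exp_sub_exp_compress (p := P) hPproj H

/-- The key small-time estimate in the proof of the Zeno product formula:
`t⁻¹ ‖P e^{-itH} P - P e^{-it PHP} P‖ → 0` as `t → 0`. -/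
theorem zeno_small_time_estimate
    {𝓗 : Type*} [NormedAddCommGroup 𝓗] [InnerProductSpace ℂ 𝓗] [CompleteSpace 𝓗]
    (H P : 𝓗 →L[ℂ] 𝓗)
    (hH : ∀ x y : 𝓗, ⟪H x, y⟫_ℂ = ⟪x, H y⟫_ℂ)
    (hPproj : P ∘L P = P)
    (hPsa : ∀ x y : 𝓗, ⟪P x, y⟫_ℂ = ⟪x, P y⟫_ℂ) :
    Filter.Tendsto
      (fun t : ℝ => (1 / t) *
        ‖P ∘L NormedSpace.exp ((-(Complex.I * t)) • H) ∘L P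
          - P ∘L NormedSpace.exp ((-(Complex.I * t)) • (P ∘L H ∘L P)) ∘L P‖)
      (𝓝 0) (𝓝 0) :=
  zeno_small_time_estimate_general H P hPproj
end

section
/- Let m₁, m₂, a₁, a₂ be positive real numbers and c a real number. Then the integral ∫_ℝ exp(−(√(p²+m₁)·a₁ + √(p²+m₂)·a₂)) / (√(p²+m₁)·√(p²+m₂)) · exp(i·p·c) dp converges absolutely and its modulus is at most π·(m₁·m₂)^{−1/4} · exp(−(√m₁·a₁ + √m₂·a₂)/√2). -/
/-!
The oscillating factor has modulus one, so everything reduces to bounding the real kernel.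
Its numerator is largest at `p = 0`, and by AM-GM `√(p² + m₁) √(p² + m₂) ≥ p² + √(m₁ m₂)`.
Hence the kernel is dominated by `e^{-(√m₁ a₁ + √m₂ a₂)}` times a Lorentzian of width
`(m₁ m₂)^{1/4}`, whose integral over `ℝ` is `π (m₁ m₂)^{-1/4}`; the factor `1/√2` in the
exponent is then mere slack.
-/

open MeasureTheory Real

lemma inv_sq_add_eq_inv_mul_inv_one_add_div_sq {b : ℝ} (hb : 0 < b) (x : ℝ) :
    (x ^ 2 + b)⁻¹ = b⁻¹ * (1 + (x / √b) ^ 2)⁻¹ := by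
  rw [div_pow, sq_sqrt hb.le, ← mul_inv]
  field_simp
  ring

lemma integrable_inv_sq_add {b : ℝ} (hb : 0 < b) : Integrable fun x : ℝ => (x ^ 2 + b)⁻¹ := by
  simp_rw [inv_sq_add_eq_inv_mul_inv_one_add_div_sq hb]
  exact (integrable_inv_one_add_sq.comp_div (sqrt_pos.2 hb).ne').const_mul _

lemma integral_inv_sq_add {b : ℝ} (hb : 0 < b) : ∫ x : ℝ, (x ^ 2 + b)⁻¹ = π / √b := by
  simp_rw [inv_sq_add_eq_inv_mul_inv_one_add_div_sq hb]
  rw [integral_const_mul, Measure.integral_comp_div (fun x => (1 + x ^ 2)⁻¹),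
    integral_univ_inv_one_add_sq, abs_of_pos (sqrt_pos.2 hb), smul_eq_mul]
  nth_rw 1 [← sq_sqrt hb.le]
  field_simp

lemma add_sqrt_mul_le_sqrt_add_mul_sqrt_add {x m₁ m₂ : ℝ} (hx : 0 ≤ x) (hm₁ : 0 ≤ m₁)
    (hm₂ : 0 ≤ m₂) : x + √(m₁ * m₂) ≤ √(x + m₁) * √(x + m₂) := by
  rw [← sqrt_mul (by positivity), le_sqrt (by positivity) (by positivity), add_sq,
    sq_sqrt (by positivity), sqrt_mul hm₁]
  nlinarith [sq_nonneg (√m₁ - √m₂), sq_sqrt hm₁, sq_sqrt hm₂]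

lemma norm_ofReal_mul_exp_I_mul (r p c : ℝ) :
    ‖(r : ℂ) * Complex.exp (Complex.I * p * c)‖ = |r| := by
  rw [norm_mul, Complex.norm_real, mul_assoc, ← Complex.ofReal_mul,
    Complex.norm_exp_I_mul_ofReal, mul_one, norm_eq_abs]

section FourierBound

variable {μ : Measure ℝ} {g h : ℝ → ℝ}

lemma integrable_ofReal_mul_exp_I_mul (c : ℝ) (hg : AEStronglyMeasurable g μ)
    (hh : Integrable h μ) (hgh : ∀ p, |g p| ≤ h p) :
    Integrable (fun p : ℝ => (g p : ℂ) * Complex.exp (Complex.I * p * c)) μ := by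
  refine hh.mono' ?_ (.of_forall fun p => (norm_ofReal_mul_exp_I_mul _ p c).trans_le (hgh p))
  exact (Complex.continuous_ofReal.comp_aestronglyMeasurable hg).mul
    (by fun_prop : Continuous fun p : ℝ => Complex.exp (Complex.I * p * c)).aestronglyMeasurable

lemma norm_integral_ofReal_mul_exp_I_mul_le (c : ℝ) (hh : Integrable h μ)
    (hgh : ∀ p, |g p| ≤ h p) :
    ‖∫ p, (g p : ℂ) * Complex.exp (Complex.I * p * c) ∂μ‖ ≤ ∫ p, h p ∂μ :=
  norm_integral_le_of_norm_le hh
    (.of_forall fun p => (norm_ofReal_mul_exp_I_mul _ p c).trans_le (hgh p))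

end FourierBound

lemma exp_div_sqrt_mul_sqrt_le {m₁ m₂ a₁ a₂ : ℝ} (hm₁ : 0 < m₁) (hm₂ : 0 < m₂) (ha₁ : 0 ≤ a₁)
    (ha₂ : 0 ≤ a₂) (p : ℝ) :
    exp (-(√(p ^ 2 + m₁) * a₁ + √(p ^ 2 + m₂) * a₂)) / (√(p ^ 2 + m₁) * √(p ^ 2 + m₂)) ≤
      exp (-(√m₁ * a₁ + √m₂ * a₂)) * (p ^ 2 + √(m₁ * m₂))⁻¹ := by
  rw [div_eq_mul_inv]
  gcongr
  · linarith [sq_nonneg p]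
  · linarith [sq_nonneg p]
  · exact add_sqrt_mul_le_sqrt_add_mul_sqrt_add (sq_nonneg p) hm₁.le hm₂.le

/-- The momentum-representation integral for the boundary overlap of two point-interaction
eigenfunctions: it converges absolutely and is exponentially small in `a₁`, `a₂`. -/
theorem overlap_integral_bound
    (m₁ m₂ a₁ a₂ : ℝ) (hm₁ : 0 < m₁) (hm₂ : 0 < m₂) (ha₁ : 0 < a₁) (ha₂ : 0 < a₂)
    (c : ℝ) :
    Integrable (fun p : ℝ =>
      ((Real.exp (-(Real.sqrt (p ^ 2 + m₁) * a₁ + Real.sqrt (p ^ 2 + m₂) * a₂)) /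
          (Real.sqrt (p ^ 2 + m₁) * Real.sqrt (p ^ 2 + m₂)) : ℝ) : ℂ) *
        Complex.exp (Complex.I * p * c)) ∧
    ‖∫ p : ℝ,
      ((Real.exp (-(Real.sqrt (p ^ 2 + m₁) * a₁ + Real.sqrt (p ^ 2 + m₂) * a₂)) /
          (Real.sqrt (p ^ 2 + m₁) * Real.sqrt (p ^ 2 + m₂)) : ℝ) : ℂ) *
        Complex.exp (Complex.I * p * c)‖
      ≤ Real.pi * (m₁ * m₂) ^ (-(1 / 4 : ℝ)) *
          Real.exp (-(Real.sqrt m₁ * a₁ + Real.sqrt m₂ * a₂) / Real.sqrt 2) := by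
  have hm : 0 < √(m₁ * m₂) := by positivity
  set E := exp (-(√m₁ * a₁ + √m₂ * a₂) / √2)
  have hbound : ∀ p : ℝ, |exp (-(√(p ^ 2 + m₁) * a₁ + √(p ^ 2 + m₂) * a₂)) /
      (√(p ^ 2 + m₁) * √(p ^ 2 + m₂))| ≤ E * (p ^ 2 + √(m₁ * m₂))⁻¹ := fun p => by
    rw [abs_of_nonneg (by positivity)]
    refine (exp_div_sqrt_mul_sqrt_le hm₁ hm₂ ha₁.le ha₂.le p).trans ?_
    gcongr
    refine exp_le_exp.2 ?_
    rw [neg_div, neg_le_neg_iff]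
    exact div_le_self (by positivity) (one_le_sqrt.2 one_le_two)
  have hint := (integrable_inv_sq_add hm).const_mul E
  refine ⟨integrable_ofReal_mul_exp_I_mul c (by fun_prop : Measurable _).aestronglyMeasurable
    hint hbound, (norm_integral_ofReal_mul_exp_I_mul_le c hint hbound).trans_eq ?_⟩
  have hroot : √√(m₁ * m₂) = (m₁ * m₂) ^ (1 / 4 : ℝ) := by
    rw [sqrt_eq_rpow, sqrt_eq_rpow, ← rpow_mul (by positivity)]
    norm_num
  rw [integral_const_mul, integral_inv_sq_add hm, hroot, div_eq_mul_inv,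
    ← rpow_neg (by positivity)]
  ring
end

section
/- Let A be a complex Banach algebra, p ∈ A an idempotent (p·p = p) and x ∈ A with p·x = x and x·p = x. Then (p + (1/n)·x)^n converges in norm, as n → ∞, to exp(x)·p. -/
/-!
Expanding binomially, `(1 + x/n)^n = ∑ₖ C(n,k) n⁻ᵏ xᵏ`, and each coefficient `C(n,k) n⁻ᵏ` tends to
`1/k!` while staying below it, so Tannery's theorem (dominated convergence for series, dominated by
`‖xᵏ‖/k!`) gives `(1 + x/n)^n → exp x`. Since `p + x/n = (1 + x/n) p` with `p` commuting with
`1 + x/n`, and `p` is idempotent, `(p + x/n)^n = (1 + x/n)^n p` for `n ≥ 1`.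
-/

open scoped Topology Nat
open Filter Finset

section

variable {𝕂 A : Type*} [RCLike 𝕂] [NormedRing A] [NormedAlgebra 𝕂 A]

theorem one_add_smul_pow_eq_tsum (c : 𝕂) (x : A) (n : ℕ) :
    (1 + c • x) ^ n = ∑' k, ((n.choose k : 𝕂) * c ^ k) • x ^ k := by
  rw [tsum_eq_sum (s := range (n + 1)) fun k hk => by
      rw [Nat.choose_eq_zero_of_lt (by simpa using hk)]; simp,
    add_comm, (Commute.one_right _).add_pow]
  refine sum_congr rfl fun k _ => ?_
  rw [one_pow, mul_one, smul_pow, ← Nat.cast_comm, ← nsmul_eq_mul, ← Nat.cast_smul_eq_nsmul 𝕂,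
    smul_smul, mul_comm]

theorem tendsto_choose_mul_inv_pow (k : ℕ) :
    Tendsto (fun n : ℕ => (n.choose k : 𝕂) * (n : 𝕂)⁻¹ ^ k) atTop (𝓝 (k ! : 𝕂)⁻¹) := by
  have h := ProbabilityTheory.tendsto_choose_mul_pow_atTop (p := fun n : ℕ => (n : ℝ)⁻¹) (r := 1) k
    (tendsto_const_nhds.congr' (by
      filter_upwards [eventually_ne_atTop 0] with n hn
      field_simp))
  simpa [Function.comp_def] using (RCLike.continuous_ofReal (K := 𝕂)).continuousAt.tendsto.comp h

theorem norm_choose_mul_inv_pow_le (n k : ℕ) :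
    ‖(n.choose k : 𝕂) * (n : 𝕂)⁻¹ ^ k‖ ≤ (k ! : ℝ)⁻¹ := by
  rcases n.eq_zero_or_pos with rfl | hn
  · rcases k with _ | k <;> simp
  have hn' : (0 : ℝ) < n := by exact_mod_cast hn
  calc ‖(n.choose k : 𝕂) * (n : 𝕂)⁻¹ ^ k‖ = n.choose k / (n : ℝ) ^ k := by
        rw [norm_mul, norm_pow, norm_inv, RCLike.norm_natCast, RCLike.norm_natCast, inv_pow,
          div_eq_mul_inv]
    _ ≤ (n : ℝ) ^ k / k ! / (n : ℝ) ^ k := by gcongr; exact Nat.choose_le_pow_div k n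
    _ = (k ! : ℝ)⁻¹ := by field_simp

variable [CompleteSpace A]

theorem tendsto_one_add_inv_smul_pow_exp (x : A) :
    Tendsto (fun n : ℕ => (1 + (n : 𝕂)⁻¹ • x) ^ n) atTop (𝓝 (NormedSpace.exp x)) := by
  simp_rw [one_add_smul_pow_eq_tsum, NormedSpace.exp_eq_tsum 𝕂]
  refine tendsto_tsum_of_dominated_convergence (NormedSpace.norm_expSeries_summable' (𝕂 := 𝕂) x)
    (fun k => (tendsto_choose_mul_inv_pow k).smul_const _) (.of_forall fun n k => ?_)
  rw [norm_smul, norm_smul, norm_inv, RCLike.norm_natCast]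
  exact mul_le_mul_of_nonneg_right (norm_choose_mul_inv_pow_le n k) (norm_nonneg _)

end

theorem IsIdempotentElem.add_pow_succ {R : Type*} [Ring R] {p y : R} (hp : IsIdempotentElem p)
    (hpy : p * y = y) (hyp : y * p = y) (n : ℕ) : (p + y) ^ (n + 1) = (1 + y) ^ (n + 1) * p := by
  have hfactor : p + y = (1 + y) * p := by rw [add_mul, one_mul, hyp]
  have hcomm : Commute (1 + y) p := by
    rw [Commute, SemiconjBy, ← hfactor, mul_add, mul_one, hpy]
  rw [hfactor, hcomm.mul_pow, hp.pow_succ_eq]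

/-- In a complex Banach algebra, if `p` is idempotent and `p x = x = x p`, then
`(p + x/n)^n → exp(x) p` in norm as `n → ∞`. -/
theorem idempotent_exp_limit
    {A : Type*} [NormedRing A] [NormedAlgebra ℂ A] [CompleteSpace A]
    (p x : A) (hp : p * p = p) (hpx : p * x = x) (hxp : x * p = x) :
    Filter.Tendsto (fun n : ℕ => (p + ((n : ℂ))⁻¹ • x) ^ n) Filter.atTop
      (𝓝 (NormedSpace.exp x * p)) := by
  refine ((tendsto_one_add_inv_smul_pow_exp (𝕂 := ℂ) x).mul_const p).congr' ?_
  filter_upwards [eventually_ge_atTop 1] with n hn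
  obtain ⟨m, rfl⟩ := Nat.exists_eq_add_of_le' hn
  have hpy : p * ((↑(m + 1) : ℂ)⁻¹ • x) = (↑(m + 1) : ℂ)⁻¹ • x := by rw [mul_smul_comm, hpx]
  have hyp : ((↑(m + 1) : ℂ)⁻¹ • x) * p = (↑(m + 1) : ℂ)⁻¹ • x := by rw [smul_mul_assoc, hxp]
  exact (IsIdempotentElem.add_pow_succ hp hpy hyp m).symm
end
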